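/- arXiv:2305.12023 — 4 statements merged into one kernel-verified Lean document; each statement's English description precedes it below -/
import Mathlib

section
/- For every integer k ≥ 1, if a symmetric n×n 0,1-matrix M admits a sequence of symmetric divisions each of which is k-diagonal, then stw(M) ≤ 4k³. -/
/-!
Each division `D` is turned into the partition of `[n]` whose classes are the rows that lie in a
common interval `I_i` and agree outside the band `I_{i-k+1} ∪ … ∪ I_{i+k-1}`. As `I_i` is not
`k`-wide, some window of `k` intervals around `i`, hence also the band, leaves fewer than `k`
distinct rows, so `I_i` splits into at most `k - 1` classes. Merging two consecutive intervals
coarsens this partition, and we pass from one partition to the next by merging two parts at a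
time. Every intermediate partition `R` refines the classes of the coarser division `D` and is
coarser than those of the finer one `E`. By symmetry of `M`, a zone `X × C` with `C` outside the
band of `X` (so `X` outside the band of `C`) is constant, so the red neighbourhood of a part of
`R` stays in its band; the parts conflicting with it therefore lie in the `2k - 1` intervals of
the band, and each interval of `D` (the union of at most two intervals of `E`) contains at most
`2(k - 1)` parts of `R`. This bounds the stretch by `(2k - 1) · 2(k - 1) ≤ 4k³`.
-/

open Finset

noncomputable section
open scoped Classical
set_option linter.unusedSectionVars false
set_option linter.unusedVariables false

namespace StretchPaper

/-! ### Partitions, red graphs, component twin-width and stretch-width of graphs -/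

variable {V : Type} [Fintype V] [DecidableEq V]

/-- Two parts are inhomogeneous in `G`. -/
def Inhomog (G : SimpleGraph V) (X Y : Finset V) : Prop :=
  (∃ x ∈ X, ∃ y ∈ Y, G.Adj x y) ∧ (∃ x ∈ X, ∃ y ∈ Y, ¬ G.Adj x y)

lemma Inhomog.symm {G : SimpleGraph V} {X Y : Finset V} (h : Inhomog G X Y) :
    Inhomog G Y X := by
  obtain ⟨⟨x, hx, y, hy, hxy⟩, ⟨x', hx', y', hy', hxy'⟩⟩ := h
  exact ⟨⟨y, hy, x, hx, hxy.symm⟩, ⟨y', hy', x', hx', fun hc => hxy' hc.symm⟩⟩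

/-- `P` is obtained from `Q` by merging two parts. -/
def MergeStep (Q P : Finpartition (Finset.univ : Finset V)) : Prop :=
  ∃ A ∈ Q.parts, ∃ B ∈ Q.parts, A ≠ B ∧
    P.parts = insert (A ∪ B) ((Q.parts.erase A).erase B)

/-- `l = [P_n, …, P_1]` is a partition sequence: it starts at the partition into
singletons, ends at the partition with the single part `univ`, and each partition is
obtained from the previous one by merging two parts. -/
def IsPartitionSeq (l : List (Finpartition (Finset.univ : Finset V))) : Prop :=
  (∃ P, l.head? = some P ∧ ∀ X ∈ P.parts, X.card = 1) ∧
  (∃ P, l.getLast? = some P ∧ P.parts = {Finset.univ}) ∧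
  l.Chain' MergeStep

/-- The red graph of a partition: parts are vertices, inhomogeneous pairs are edges. -/
def redGraph (G : SimpleGraph V) (P : Finpartition (Finset.univ : Finset V)) :
    SimpleGraph {X : Finset V // X ∈ P.parts} where
  Adj X Y := X ≠ Y ∧ Inhomog G X.1 Y.1
  symm := ⟨fun X Y h => ⟨h.1.symm, h.2.symm⟩⟩
  loopless := ⟨fun X h => h.1 rfl⟩

/-- The largest number of parts contained in a single connected component of the red graph. -/
def maxRedComponentSize (G : SimpleGraph V) (P : Finpartition (Finset.univ : Finset V)) : ℕ :=
  Finset.univ.sup fun X : {X : Finset V // X ∈ P.parts} =>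
    (Finset.univ.filter fun Y => (redGraph G P).Reachable X Y).card

/-- Component twin-width. -/
def ctww (G : SimpleGraph V) : ℕ :=
  sInf { k | ∃ l, IsPartitionSeq l ∧ ∀ P ∈ l, maxRedComponentSize G P ≤ k }

section Ord
variable [LinearOrder V]

/-- The convex closure (span) of a set of vertices along the linear order. -/
def conv (X : Finset V) : Finset V :=
  Finset.univ.filter fun v => (∃ a ∈ X, a ≤ v) ∧ ∃ b ∈ X, v ≤ b

/-- Two sets are in conflict if their spans intersect. -/
def Conflict (X Y : Finset V) : Prop := (conv X ∩ conv Y).Nonempty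

/-- The union of a part `X` and of all parts adjacent to `X` in the red graph. -/
def redClosedNbhd (G : SimpleGraph V) (P : Finpartition (Finset.univ : Finset V))
    (X : Finset V) : Finset V :=
  X ∪ (P.parts.filter fun Y => Y ≠ X ∧ Inhomog G X Y).biUnion id

/-- The stretch of a part `X` of `P`: the number of parts `Y ≠ X` that conflict with the
union of `X` and all parts adjacent to `X` in the red graph (i.e. that interfere with `X`). -/
def stretchPart (G : SimpleGraph V) (P : Finpartition (Finset.univ : Finset V))
    (X : Finset V) : ℕ :=
  ((P.parts.erase X).filter fun Y => Conflict Y (redClosedNbhd G P X)).card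

/-- The stretch of a partition: the maximum stretch of a part. -/
def stretchPartition (G : SimpleGraph V) (P : Finpartition (Finset.univ : Finset V)) : ℕ :=
  P.parts.sup fun X => stretchPart G P X

/-- Stretch-width of the ordered graph `(G, ≤)`. -/
def stwOrd (G : SimpleGraph V) : ℕ :=
  sInf { k | ∃ l, IsPartitionSeq l ∧ ∀ P ∈ l, stretchPartition G P ≤ k }

end Ord

/-- Stretch-width of `G`: minimum over all linear orders on the vertices. -/
def stw (G : SimpleGraph V) : ℕ :=
  sInf (Set.range fun L : LinearOrder V => @stwOrd V _ _ L G)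


/-! ### Symmetric 0,1-matrices: stretch-width and divisions -/

variable {n : ℕ}

/-- The zone `R × C` of `M` is non-constant. -/
def NonConstZone (M : Fin n → Fin n → Bool) (R C : Finset (Fin n)) : Prop :=
  ∃ r ∈ R, ∃ r' ∈ R, ∃ c ∈ C, ∃ c' ∈ C, M r c ≠ M r' c'

/-- `D_R`: the union of `R` and of all parts `C` of `P` with `R × C` non-constant. -/
def matBag (M : Fin n → Fin n → Bool) (P : Finpartition (Finset.univ : Finset (Fin n)))
    (R : Finset (Fin n)) : Finset (Fin n) :=
  R ∪ (P.parts.filter fun C => NonConstZone M R C).biUnion id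

/-- The stretch value of a part `R` of `P`. -/
def matStretchPart (M : Fin n → Fin n → Bool) (P : Finpartition (Finset.univ : Finset (Fin n)))
    (R : Finset (Fin n)) : ℕ :=
  (P.parts.filter fun Q => Conflict Q (matBag M P R)).card

/-- The stretch value of a partition. -/
def matStretch (M : Fin n → Fin n → Bool)
    (P : Finpartition (Finset.univ : Finset (Fin n))) : ℕ :=
  P.parts.sup fun R => matStretchPart M P R

/-- Stretch-width of a symmetric 0,1-matrix. -/
def stwM (M : Fin n → Fin n → Bool) : ℕ :=
  sInf { k | ∃ l : List (Finpartition (Finset.univ : Finset (Fin n))),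
    IsPartitionSeq l ∧ ∀ P ∈ l, matStretch M P ≤ k }

/-- A symmetric division `(I_1, …, I_p)` of `[n]` into consecutive nonempty intervals;
out-of-range indices denote the empty set. -/
structure SymDiv (n : ℕ) where
  p : ℕ
  I : ℤ → Finset (Fin n)
  out_empty : ∀ j : ℤ, (j < 1 ∨ (p : ℤ) < j) → I j = ∅
  in_nonempty : ∀ j : ℤ, 1 ≤ j → j ≤ (p : ℤ) → (I j).Nonempty
  interval : ∀ j : ℤ, ∀ a ∈ I j, ∀ c ∈ I j, ∀ b : Fin n, a ≤ b → b ≤ c → b ∈ I j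
  increasing : ∀ j : ℤ, ∀ a ∈ I j, ∀ b ∈ I (j + 1), a < b
  covers : ∀ v : Fin n, ∃ j : ℤ, v ∈ I j

/-- The restriction of row `r` of `M` to the columns outside `U`. -/
def rowRestr (M : Fin n → Fin n → Bool) (U : Finset (Fin n)) (r : Fin n) :
    Fin n → Option Bool :=
  fun c => if c ∈ U then none else some (M r c)

/-- The union `I_j ∪ I_{j+1} ∪ … ∪ I_{j+k-1}`. -/
def window (D : SymDiv n) (j : ℤ) (k : ℕ) : Finset (Fin n) :=
  (Finset.Icc j (j + (k : ℤ) - 1)).biUnion D.I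

/-- The part `I_i` of `D` is `k`-wide. -/
def WidePart (M : Fin n → Fin n → Bool) (D : SymDiv n) (k : ℕ) (i : ℤ) : Prop :=
  ∀ j : ℤ, j ≤ i → i ≤ j + (k : ℤ) - 1 →
    k ≤ ((D.I i).image (rowRestr M (window D j k))).card

/-- The division `D` is `k`-wide. -/
def WideDiv (M : Fin n → Fin n → Bool) (D : SymDiv n) (k : ℕ) : Prop :=
  ∀ i : ℤ, 1 ≤ i → i ≤ (D.p : ℤ) → WidePart M D k i

/-- The division `D` is `k`-diagonal. -/
def DiagDiv (M : Fin n → Fin n → Bool) (D : SymDiv n) (k : ℕ) : Prop :=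
  ∀ i : ℤ, 1 ≤ i → i ≤ (D.p : ℤ) → ¬ WidePart M D k i

/-- `D` is obtained from `E` by merging two consecutive intervals. -/
def DivMerge (E D : SymDiv n) : Prop :=
  D.p + 1 = E.p ∧ ∃ m : ℤ, 1 ≤ m ∧ m < (E.p : ℤ) ∧
    (∀ j : ℤ, j < m → D.I j = E.I j) ∧
    D.I m = E.I m ∪ E.I (m + 1) ∧
    (∀ j : ℤ, m < j → D.I j = E.I (j + 1))

/-- `l = [D_n, …, D_1]` is a sequence of symmetric divisions: from the division into
`n` singletons to the division with one part, merging two consecutive intervals at each step. -/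
def IsDivSeq (l : List (SymDiv n)) : Prop :=
  (∃ D, l.head? = some D ∧ D.p = n) ∧
  (∃ D, l.getLast? = some D ∧ D.p = 1) ∧
  l.Chain' DivMerge


/-! ### Ordered graphs, crossing edges, overlap graphs -/

section Overlap
variable {α : Type} [LinearOrder α]

/-- The left (smaller) endpoint of an edge. -/
def eL (e : Sym2 α) : α := Sym2.lift ⟨fun a b => min a b, fun a b => min_comm a b⟩ e

/-- The right (larger) endpoint of an edge. -/
def eR (e : Sym2 α) : α := Sym2.lift ⟨fun a b => max a b, fun a b => max_comm a b⟩ e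

/-- Two edges cross: `L(e) ≺ L(f) ≺ R(e) ≺ R(f)` or `L(f) ≺ L(e) ≺ R(f) ≺ R(e)`. -/
def Cross (e f : Sym2 α) : Prop :=
  (eL e < eL f ∧ eL f < eR e ∧ eR e < eR f) ∨
  (eL f < eL e ∧ eL e < eR f ∧ eR f < eR e)

/-- The overlap graph of `(G, ≤)` has a `K_{t,t}` subgraph: two disjoint sets of `t` edges
of `G` each, such that every edge of one set crosses every edge of the other. -/
def OvHasKtt (G : SimpleGraph α) (t : ℕ) : Prop :=
  ∃ A B : Finset (Sym2 α), ↑A ⊆ G.edgeSet ∧ ↑B ⊆ G.edgeSet ∧ Disjoint A B ∧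
    A.card = t ∧ B.card = t ∧ ∀ e ∈ A, ∀ f ∈ B, Cross e f

variable [Fintype α]

/-- The interior of an edge: the vertices strictly between its endpoints. -/
def edgeInterior (e : Sym2 α) : Finset α :=
  Finset.univ.filter fun x => eL e < x ∧ x < eR e

/-- The length of an edge: the number of vertices `x` with `L(e) ≺ x ⪯ R(e)`. -/
def edgeLen (e : Sym2 α) : ℕ := (Finset.univ.filter fun x => eL e < x ∧ x ≤ eR e).card

/-- The maximum length of an edge of `S` (0 if `S` is empty). -/
def lenSup (S : Finset (Sym2 α)) : ℕ := S.sup edgeLen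

/-- A rainbow: a set of edges of `G` whose interiors are pairwise nested. -/
def IsRainbow (G : SimpleGraph α) (S : Finset (Sym2 α)) : Prop :=
  ↑S ⊆ G.edgeSet ∧
  ∀ e ∈ S, ∀ f ∈ S, edgeInterior e ⊆ edgeInterior f ∨ edgeInterior f ⊆ edgeInterior e

/-- A rainbow over the vertex `v`. -/
def IsRainbowOver (G : SimpleGraph α) (S : Finset (Sym2 α)) (v : α) : Prop :=
  IsRainbow G S ∧ ∀ e ∈ S, eL e < v ∧ v < eR e

/-- A maximum rainbow over `v`. -/
def IsMaxRainbowOver (G : SimpleGraph α) (S : Finset (Sym2 α)) (v : α) : Prop :=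
  IsRainbowOver G S v ∧ ∀ S' : Finset (Sym2 α), IsRainbowOver G S' v → S'.card ≤ S.card

end Overlap

/-! ### Balanced separators and tree-decompositions -/

section Sep
variable {V : Type} [Fintype V] [DecidableEq V]

/-- `C` is a `c`-balanced separator of `G`. -/
def IsBalancedSeparator (G : SimpleGraph V) (c : ℝ) (C : Finset V) : Prop :=
  ∃ A B : Finset V, Disjoint A B ∧ A ∪ B = Finset.univ \ C ∧
    (∀ a ∈ A, ∀ b ∈ B, ¬ G.Adj a b) ∧
    (A.card : ℝ) ≤ (1 - c) * (Fintype.card V) ∧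
    (B.card : ℝ) ≤ (1 - c) * (Fintype.card V)

/-- `(T, β)` is a tree-decomposition of `G`. -/
def IsTreeDecomp (G : SimpleGraph V) {m : ℕ} (T : SimpleGraph (Fin m))
    (β : Fin m → Finset V) : Prop :=
  T.Connected ∧ T.IsAcyclic ∧
  (∀ v : V, ∃ t, v ∈ β t) ∧
  (∀ u v : V, G.Adj u v → ∃ t, u ∈ β t ∧ v ∈ β t) ∧
  (∀ v : V, (T.induce {t | v ∈ β t}).Connected)

/-- Treewidth: the minimum width of a tree-decomposition of `G`. -/
def treewidth (G : SimpleGraph V) : ℕ :=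
  sInf { k | ∃ (m : ℕ) (T : SimpleGraph (Fin m)) (β : Fin m → Finset V),
    IsTreeDecomp G T β ∧ (Finset.univ.sup fun t => (β t).card) - 1 ≤ k }

end Sep


/-! ### Subdivisions -/

/-- The internal vertices of a walk (its support minus the two endpoints). -/
def walkInternal {W : Type} {H : SimpleGraph W} {a b : W} (p : H.Walk a b) : List W :=
  p.support.tail.dropLast

/-- `H` is obtained from `G` by subdividing every edge at least `s` times. -/
def IsSubdivisionGE {V W : Type} (G : SimpleGraph V) (H : SimpleGraph W) (s : ℕ) : Prop :=
  ∃ (φ : V ↪ W) (p : ∀ u v : V, G.Adj u v → H.Walk (φ u) (φ v)),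
    (∀ u v huv, (p u v huv).IsPath) ∧
    (∀ u v huv, s + 1 ≤ (p u v huv).length) ∧
    (∀ u v huv, p u v huv = (p v u huv.symm).reverse) ∧
    (∀ u v huv, ∀ x ∈ walkInternal (p u v huv), x ∉ Set.range φ) ∧
    (∀ u v huv, ∀ u' v' h', s(u, v) ≠ s(u', v') →
      ∀ x ∈ walkInternal (p u v huv), x ∉ walkInternal (p u' v' h')) ∧
    (∀ x : W, x ∈ Set.range φ ∨ ∃ u v huv, x ∈ walkInternal (p u v huv)) ∧
    (∀ e ∈ H.edgeSet, ∃ u v huv, e ∈ (p u v huv).edges)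

/-- Subdividing the edge `uv` of `G` once: the new vertex is `none : Option V`. -/
def subdivideOnce {V : Type} (G : SimpleGraph V) (u v : V) : SimpleGraph (Option V) where
  Adj x y :=
    match x, y with
    | some a, some b => G.Adj a b ∧ s(a, b) ≠ s(u, v)
    | some a, none => a = u ∨ a = v
    | none, some b => b = u ∨ b = v
    | none, none => False
  symm := by
    constructor
    rintro (_ | a) (_ | b) h
    · exact h
    · exact h
    · exact h
    · exact ⟨h.1.symm, by rw [Sym2.eq_swap]; exact h.2⟩
  loopless := by
    constructor
    rintro (_ | a) h
    · exact h
    · exact G.loopless.irrefl a h.1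

/-! ### Flattening (iterated subdivisions) -/

/-- The number of vertices strictly between `u` and `v`. -/
def interiorCount {V : Type} [Fintype V] [LinearOrder V] (u v : V) : ℕ :=
  (Finset.univ.filter fun x => u < x ∧ x < v).card

/-- The ordered graph `H` is obtained from `(G, ≤)` by flattening the edge `uv`, via the
order-embedding `φ` of old vertices and the new vertices `w 0, …, w h` interleaved with
the vertices between `u` and `v`. -/
def IsFlattenStepWith {V W : Type} [Fintype V] [LinearOrder V] [Fintype W] [LinearOrder W]
    (G : SimpleGraph V) (u v : V) (H : SimpleGraph W) (φ : V → W) (w : ℕ → W) : Prop :=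
  G.Adj u v ∧ u < v ∧ StrictMono φ ∧
  (∀ x : W, (∃ a : V, x = φ a) ∨ ∃ i ≤ interiorCount u v, x = w i) ∧
  (∀ a : V, ∀ i ≤ interiorCount u v, φ a ≠ w i) ∧
  (∀ i ≤ interiorCount u v,
    (Finset.univ.filter fun x => u ≤ x ∧ x ≤ v ∧ φ x < w i).card = i + 1) ∧
  (∀ a b : W, H.Adj a b ↔
    ((∃ x y : V, G.Adj x y ∧ s(x, y) ≠ s(u, v) ∧ s(a, b) = s(φ x, φ y)) ∨
     s(a, b) = s(φ u, w 0) ∨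
     (∃ i : ℕ, i + 1 ≤ interiorCount u v ∧ s(a, b) = s(w i, w (i + 1))) ∨
     s(a, b) = s(w (interiorCount u v), φ v)))

/-! ### The graphs `A_3^h` -/

/-- The graph `A_3^h` on vertex set `{0, …, 3^h − 1}`: distinct `u, v` are adjacent iff
`|⌊u/3^l⌋ − ⌊v/3^l⌋| = 3` for some `l < h`. -/
def Agraph (h : ℕ) : SimpleGraph (Fin (3 ^ h)) where
  Adj u v := u ≠ v ∧ ∃ l < h,
    ((u : ℕ) / 3 ^ l = (v : ℕ) / 3 ^ l + 3 ∨ (v : ℕ) / 3 ^ l = (u : ℕ) / 3 ^ l + 3)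
  symm := by
    constructor
    rintro u v ⟨hne, l, hl, hd⟩
    exact ⟨hne.symm, l, hl, hd.symm⟩
  loopless := ⟨fun u h => h.1 rfl⟩

end StretchPaper

namespace Finpartition

variable {α : Type*} [DecidableEq α] {s : Finset α}

section Merge

def mergeParts (P : Finpartition s) {X Y : Finset α} (hX : X ∈ P.parts) (hY : Y ∈ P.parts) :
    Finpartition s where
  parts := insert (X ∪ Y) ((P.parts.erase X).erase Y)
  supIndep := by
    rw [Finset.supIndep_iff_pairwiseDisjoint]
    have hdisj : ∀ Z ∈ (P.parts.erase X).erase Y, Disjoint (X ∪ Y) Z := fun Z hZ => by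
      obtain ⟨hZY, hZX, hZ⟩ := by simpa only [Finset.mem_erase] using hZ
      exact Finset.disjoint_union_left.2
        ⟨P.disjoint hX hZ (Ne.symm hZX), P.disjoint hY hZ (Ne.symm hZY)⟩
    rw [Finset.coe_insert]
    refine (P.disjoint.subset fun Z hZ => ?_).insert fun Z hZ _ => hdisj Z hZ
    exact Finset.mem_of_mem_erase (Finset.mem_of_mem_erase hZ)
  sup_parts := by
    refine le_antisymm (Finset.sup_le fun Z hZ => ?_) fun v hv => ?_
    · rcases Finset.mem_insert.1 hZ with rfl | hZ
      · exact Finset.union_subset (P.le hX) (P.le hY)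
      · exact P.le (Finset.mem_of_mem_erase (Finset.mem_of_mem_erase hZ))
    · obtain ⟨Z, hZ, hvZ⟩ := P.exists_mem hv
      rw [Finset.mem_sup]
      by_cases hZXY : Z = X ∨ Z = Y
      · refine ⟨X ∪ Y, Finset.mem_insert_self _ _, ?_⟩
        rcases hZXY with rfl | rfl <;> simp [hvZ]
      · push Not at hZXY
        exact ⟨Z, Finset.mem_insert_of_mem
          (Finset.mem_erase.2 ⟨hZXY.2, Finset.mem_erase.2 ⟨hZXY.1, hZ⟩⟩), hvZ⟩
  bot_notMem := by
    simp only [Finset.bot_eq_empty, Finset.mem_insert, Finset.mem_erase, not_or]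
    exact ⟨fun h => P.ne_empty hX (Finset.union_eq_empty.1 h.symm).1,
      fun h => P.empty_notMem_parts h.2.2⟩

variable {P : Finpartition s} {X Y : Finset α} (hX : X ∈ P.parts) (hY : Y ∈ P.parts)

include hX hY in
theorem le_mergeParts : P ≤ P.mergeParts hX hY := fun Z hZ => by
  by_cases hZXY : Z = X ∨ Z = Y
  · refine ⟨X ∪ Y, Finset.mem_insert_self _ _, ?_⟩
    rcases hZXY with rfl | rfl
    exacts [Finset.subset_union_left, Finset.subset_union_right]
  · push Not at hZXY
    exact ⟨Z, Finset.mem_insert_of_mem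
      (Finset.mem_erase.2 ⟨hZXY.2, Finset.mem_erase.2 ⟨hZXY.1, hZ⟩⟩), le_rfl⟩

include hX hY in
theorem mergeParts_le {Q : Finpartition s} (hPQ : P ≤ Q) {Z : Finset α} (hZ : Z ∈ Q.parts)
    (hXZ : X ⊆ Z) (hYZ : Y ⊆ Z) : P.mergeParts hX hY ≤ Q := fun W hW => by
  rcases Finset.mem_insert.1 hW with rfl | hW
  · exact ⟨Z, hZ, Finset.union_subset hXZ hYZ⟩
  · exact hPQ (Finset.mem_of_mem_erase (Finset.mem_of_mem_erase hW))

include hX hY in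
theorem card_parts_mergeParts_lt (hXY : X ≠ Y) :
    #(P.mergeParts hX hY).parts < #P.parts := by
  have hYX : Y ∈ P.parts.erase X := Finset.mem_erase.2 ⟨hXY.symm, hY⟩
  calc #(insert (X ∪ Y) ((P.parts.erase X).erase Y))
      ≤ #((P.parts.erase X).erase Y) + 1 := Finset.card_insert_le _ _
    _ < #P.parts := by
      rw [Finset.card_erase_of_mem hYX, Finset.card_erase_of_mem hX]
      have := Finset.one_lt_card.2 ⟨X, hX, Y, hY, hXY⟩
      omega

end Merge

theorem exists_ne_subset_of_lt {P Q : Finpartition s} (hPQ : P < Q) :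
    ∃ X ∈ P.parts, ∃ Y ∈ P.parts, X ≠ Y ∧ ∃ Z ∈ Q.parts, X ⊆ Z ∧ Y ⊆ Z := by
  by_contra! hsep
  refine hPQ.ne (le_antisymm hPQ.le fun Z hZ => ?_)
  obtain ⟨X, hX, hXZ⟩ := exists_le_of_le hPQ.le hZ
  refine ⟨X, hX, fun v hv => ?_⟩
  obtain ⟨W, hW, hvW⟩ := P.exists_mem (Q.le hZ hv)
  obtain ⟨Z', hZ', hWZ'⟩ := hPQ.le hW
  obtain rfl : Z' = Z := Q.eq_of_mem_parts hZ' hZ (hWZ' hvW) hv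
  by_cases hWX : W = X
  · exact hWX ▸ hvW
  · exact absurd hXZ (hsep W hW X hX hWX Z' hZ' hWZ')

theorem mem_part_of_le {P Q : Finpartition s} (hPQ : P ≤ Q) {X : Finset α} (hX : X ∈ P.parts)
    {a b : α} (ha : a ∈ X) (hb : b ∈ X) : b ∈ Q.part a := by
  obtain ⟨Z, hZ, hXZ⟩ := hPQ hX
  rw [Q.part_eq_of_mem hZ (hXZ ha)]
  exact hXZ hb

section Fibers

variable [Fintype α] {β : Type*} (f : α → β)

def fibers : Finpartition (Finset.univ : Finset α) := ofSetoid (Setoid.ker f)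

variable {f}

theorem mem_part_fibers_iff {a b : α} : b ∈ (fibers f).part a ↔ f a = f b :=
  mem_part_ofSetoid_iff_rel

theorem apply_eq_of_le_fibers {P : Finpartition (Finset.univ : Finset α)} (hP : P ≤ fibers f)
    {X : Finset α} (hX : X ∈ P.parts) {a b : α} (ha : a ∈ X) (hb : b ∈ X) : f a = f b :=
  mem_part_fibers_iff.1 (mem_part_of_le hP hX ha hb)

theorem mem_part_of_fibers_le {P : Finpartition (Finset.univ : Finset α)} (hP : fibers f ≤ P)
    {a b : α} (hab : f a = f b) : b ∈ P.part a :=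
  mem_part_of_le hP ((fibers f).part_mem.2 (Finset.mem_univ a))
    ((fibers f).mem_part (Finset.mem_univ a)) (mem_part_fibers_iff.2 hab)

theorem fibers_le_fibers {γ : Type*} {g : α → γ} (hfg : ∀ a b, f a = f b → g a = g b) :
    fibers f ≤ fibers g := fun X hX => by
  obtain ⟨a, ha⟩ := (fibers f).nonempty_of_mem_parts hX
  refine ⟨(fibers g).part a, (fibers g).part_mem.2 (Finset.mem_univ a), fun b hb => ?_⟩
  rw [← (fibers f).part_eq_of_mem hX ha, mem_part_fibers_iff] at hb
  exact mem_part_fibers_iff.2 (hfg a b hb)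

theorem card_filter_subset_le_card_image [DecidableEq β]
    {P : Finpartition (Finset.univ : Finset α)} (hP : fibers f ≤ P) (J : Finset α) :
    #{X ∈ P.parts | X ⊆ J} ≤ #(J.image f) := by
  refine Finset.card_le_card_of_forall_subsingleton (fun X b => ∃ a ∈ X, f a = b) ?_ ?_
  · intro X hX
    obtain ⟨hXP, hXJ⟩ := Finset.mem_filter.1 hX
    obtain ⟨a, ha⟩ := P.nonempty_of_mem_parts hXP
    exact ⟨f a, Finset.mem_image_of_mem f (hXJ ha), a, ha, rfl⟩
  · rintro b - X ⟨hX, a, ha, rfl⟩ Y ⟨hY, a', ha', hfa⟩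
    have hXP := (Finset.mem_filter.1 hX).1
    have hYP := (Finset.mem_filter.1 hY).1
    rw [← P.part_eq_of_mem hXP ha, ← P.part_eq_of_mem hYP ha']
    exact P.part_eq_of_mem (P.part_mem.2 (Finset.mem_univ a')) (mem_part_of_fibers_le hP hfa)

theorem card_eq_one_of_mem_fibers (hf : Function.Injective f) {X : Finset α}
    (hX : X ∈ (fibers f).parts) : #X = 1 := by
  obtain ⟨a, ha⟩ := (fibers f).nonempty_of_mem_parts hX
  refine Finset.card_eq_one.2 ⟨a, Finset.eq_singleton_iff_unique_mem.2 ⟨ha, fun b hb => ?_⟩⟩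
  rw [← (fibers f).part_eq_of_mem hX ha, mem_part_fibers_iff] at hb
  exact (hf hb).symm

theorem parts_fibers_of_const [Nonempty α] (hf : ∀ a b, f a = f b) :
    (fibers f).parts = {Finset.univ} := by
  have hpart : ∀ a, (fibers f).part a = Finset.univ := fun a =>
    Finset.eq_univ_of_forall fun b => mem_part_fibers_iff.2 (hf a b)
  ext X
  rw [Finset.mem_singleton]
  constructor
  · intro hX
    obtain ⟨a, ha⟩ := (fibers f).nonempty_of_mem_parts hX
    rw [← (fibers f).part_eq_of_mem hX ha, hpart]
  · rintro rfl
    obtain ⟨a⟩ := ‹Nonempty α›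
    simpa only [hpart] using (fibers f).part_mem.2 (Finset.mem_univ a)

end Fibers

end Finpartition

namespace StretchPaper

open Relation

theorem reflTransGen_mergeStep_of_le {V : Type} [Fintype V] [DecidableEq V]
    {P Q : Finpartition (Finset.univ : Finset V)} (hPQ : P ≤ Q) :
    ReflTransGen (fun A B => MergeStep A B ∧ P ≤ B ∧ B ≤ Q) P Q := by
  induction hN : #P.parts using Nat.strong_induction_on generalizing P with
  | _ N ih =>
    by_cases hPQ' : P = Q
    · exact hPQ' ▸ ReflTransGen.refl
    obtain ⟨X, hX, Y, hY, hXY, Z, hZ, hXZ, hYZ⟩ :=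
      Finpartition.exists_ne_subset_of_lt (lt_of_le_of_ne hPQ hPQ')
    have hle := Finpartition.le_mergeParts hX hY
    have hleQ := Finpartition.mergeParts_le hX hY hPQ hZ hXZ hYZ
    have hrest := ih _ (hN ▸ Finpartition.card_parts_mergeParts_lt hX hY hXY) hleQ rfl
    exact ReflTransGen.head ⟨⟨X, hX, Y, hY, hXY, rfl⟩, hle, hleQ⟩
      (ReflTransGen.mono (fun A B h => ⟨h.1, hle.trans h.2.1, h.2.2⟩) _ _ hrest)

namespace SymDiv

variable {n : ℕ} (D : SymDiv n)

theorem bounds_of_mem {j : ℤ} {a : Fin n} (ha : a ∈ D.I j) : 1 ≤ j ∧ j ≤ D.p := by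
  by_contra hj
  rw [D.out_empty j (by omega)] at ha
  exact Finset.notMem_empty a ha

theorem lt_of_mem_of_lt {j j' : ℤ} (hjj' : j < j') {a b : Fin n} (ha : a ∈ D.I j)
    (hb : b ∈ D.I j') : a < b := by
  induction j', hjj' using Int.leInduction generalizing b with
  | base => exact D.increasing j a ha b hb
  | succ t hjt ih =>
    obtain ⟨c, hc⟩ := D.in_nonempty t (by have := D.bounds_of_mem ha; omega)
      (by have := D.bounds_of_mem hb; omega)
    exact (ih hc).trans (D.increasing t c hc b hb)

theorem eq_of_mem_of_mem {j j' : ℤ} {a : Fin n} (ha : a ∈ D.I j) (ha' : a ∈ D.I j') :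
    j = j' := by
  by_contra hne
  rcases lt_or_gt_of_ne hne with h | h
  · exact lt_irrefl a (D.lt_of_mem_of_lt h ha ha')
  · exact lt_irrefl a (D.lt_of_mem_of_lt h ha' ha)

def idx (a : Fin n) : ℤ := (D.covers a).choose

theorem mem_I_iff {j : ℤ} {a : Fin n} : a ∈ D.I j ↔ D.idx a = j :=
  ⟨D.eq_of_mem_of_mem (D.covers a).choose_spec, fun h => h ▸ (D.covers a).choose_spec⟩

theorem mem_I_idx (a : Fin n) : a ∈ D.I (D.idx a) := D.mem_I_iff.2 rfl

theorem idx_mono : Monotone D.idx := fun a b hab => by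
  by_contra! h
  exact absurd hab (not_le.2 (D.lt_of_mem_of_lt h (D.mem_I_idx b) (D.mem_I_idx a)))

theorem idx_injective (hp : D.p = n) : Function.Injective D.idx := by
  have hmaps : Set.MapsTo D.idx (Finset.univ : Finset (Fin n)) (Finset.Icc 1 (D.p : ℤ)) :=
    fun a _ => Finset.mem_Icc.2 (D.bounds_of_mem (D.mem_I_idx a))
  have hsurj : Set.SurjOn D.idx (Finset.univ : Finset (Fin n)) (Finset.Icc 1 (D.p : ℤ)) :=
    fun j hj => by
      obtain ⟨a, ha⟩ := D.in_nonempty j (Finset.mem_Icc.1 hj).1 (Finset.mem_Icc.1 hj).2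
      exact ⟨a, Finset.mem_coe.2 (Finset.mem_univ a), D.mem_I_iff.1 ha⟩
  intro a b hab
  exact Finset.injOn_of_surjOn_of_card_le _ hmaps hsurj (by simp [hp])
    (Finset.mem_coe.2 (Finset.mem_univ a)) (Finset.mem_coe.2 (Finset.mem_univ b)) hab

theorem idx_mem_of_mem_conv {T : Set ℤ} (hT : T.OrdConnected) {X : Finset (Fin n)}
    (hX : ∀ a ∈ X, D.idx a ∈ T) {v : Fin n} (hv : v ∈ conv X) : D.idx v ∈ T := by
  simp only [conv, Finset.mem_filter, Finset.mem_univ, true_and] at hv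
  obtain ⟨⟨a, ha, hav⟩, ⟨b, hb, hvb⟩⟩ := hv
  exact hT.out (hX a ha) (hX b hb) ⟨D.idx_mono hav, D.idx_mono hvb⟩

end SymDiv

section Matrix

variable {n : ℕ} {M : Fin n → Fin n → Bool}

theorem apply_eq_of_rowRestr_eq {U : Finset (Fin n)} {r r' : Fin n}
    (h : rowRestr M U r = rowRestr M U r') {c : Fin n} (hc : c ∉ U) : M r c = M r' c := by
  simpa [rowRestr, hc] using congrFun h c

theorem rowRestr_of_subset {U U' : Finset (Fin n)} (hU : U ⊆ U') (r : Fin n) :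
    rowRestr M U' r = fun c => if c ∈ U' then none else rowRestr M U r c := by
  funext c
  by_cases hc : c ∈ U'
  · simp [rowRestr, hc]
  · simp [rowRestr, hc, show c ∉ U from fun h => hc (hU h)]

theorem rowRestr_eq_of_subset {U U' : Finset (Fin n)} (hU : U ⊆ U') {r r' : Fin n}
    (h : rowRestr M U r = rowRestr M U r') : rowRestr M U' r = rowRestr M U' r' := by
  rw [rowRestr_of_subset hU, rowRestr_of_subset hU, h]

theorem card_image_rowRestr_le_of_subset (S : Finset (Fin n)) {U U' : Finset (Fin n)}
    (hU : U ⊆ U') : #(S.image (rowRestr M U')) ≤ #(S.image (rowRestr M U)) := by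
  calc #(S.image (rowRestr M U'))
      = #((S.image (rowRestr M U)).image fun p c => if c ∈ U' then none else p c) := by
        rw [Finset.image_image]
        exact congrArg _ (Finset.image_congr fun r _ => rowRestr_of_subset hU r)
    _ ≤ #(S.image (rowRestr M U)) := Finset.card_image_le

theorem not_nonConstZone_of_rowRestr_eq (hM : ∀ i j, M i j = M j i)
    {R C U U' : Finset (Fin n)}
    (hR : ∀ r ∈ R, ∀ r' ∈ R, rowRestr M U r = rowRestr M U r')
    (hC : ∀ c ∈ C, ∀ c' ∈ C, rowRestr M U' c = rowRestr M U' c')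
    (hCU : ∀ c ∈ C, c ∉ U) (hRU' : ∀ r ∈ R, r ∉ U') : ¬ NonConstZone M R C := by
  rintro ⟨r, hr, r', hr', c, hc, c', hc', hne⟩
  refine hne ?_
  calc M r c = M r' c := apply_eq_of_rowRestr_eq (hR r hr r' hr') (hCU c hc)
    _ = M c r' := hM r' c
    _ = M c' r' := apply_eq_of_rowRestr_eq (hC c hc c' hc') (hRU' r' hr')
    _ = M r' c' := hM c' r'

end Matrix

namespace SymDiv

variable {n k : ℕ} {M : Fin n → Fin n → Bool} (D : SymDiv n)

def band (k : ℕ) (i : ℤ) : Finset (Fin n) :=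
  Finset.univ.filter fun a => D.idx a ∈ Set.Ioo (i - k) (i + k)

theorem mem_band {i : ℤ} {a : Fin n} :
    a ∈ D.band k i ↔ D.idx a ∈ Set.Ioo (i - k) (i + k) := by
  simp [band]

theorem window_subset_band {i j : ℤ} (hji : j ≤ i) (hij : i ≤ j + k - 1) :
    window D j k ⊆ D.band k i := by
  intro a ha
  simp only [window, Finset.mem_biUnion, Finset.mem_Icc] at ha
  obtain ⟨t, ht, hat⟩ := ha
  rw [mem_band, D.mem_I_iff.1 hat, Set.mem_Ioo]
  omega

theorem card_image_rowRestr_band_le (hD : DiagDiv M D k) (i : ℤ) :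
    #((D.I i).image (rowRestr M (D.band k i))) ≤ k - 1 := by
  by_cases hi : 1 ≤ i ∧ i ≤ D.p
  · obtain ⟨j, hji, hij, hlt⟩ : ∃ j : ℤ, j ≤ i ∧ i ≤ j + k - 1 ∧
        #((D.I i).image (rowRestr M (window D j k))) < k := by
      simpa [WidePart] using hD i hi.1 hi.2
    have := card_image_rowRestr_le_of_subset (M := M) (D.I i) (D.window_subset_band hji hij)
    omega
  · simp [D.out_empty i (by omega)]

def rowKey (M : Fin n → Fin n → Bool) (k : ℕ) (a : Fin n) : ℤ × (Fin n → Option Bool) :=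
  (D.idx a, rowRestr M (D.band k (D.idx a)) a)

def rowPartition (M : Fin n → Fin n → Bool) (k : ℕ) :
    Finpartition (Finset.univ : Finset (Fin n)) :=
  Finpartition.fibers (D.rowKey M k)

theorem card_image_rowKey_le (hD : DiagDiv M D k) (i : ℤ) :
    #((D.I i).image (D.rowKey M k)) ≤ k - 1 := by
  have hkey : (D.I i).image (D.rowKey M k) =
      ((D.I i).image (rowRestr M (D.band k i))).image (Prod.mk i) := by
    rw [Finset.image_image]
    exact Finset.image_congr fun a ha => by simp [rowKey, D.mem_I_iff.1 ha]
  rw [hkey]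
  exact Finset.card_image_le.trans (D.card_image_rowRestr_band_le hD i)

theorem card_eq_one_of_mem_rowPartition (hp : D.p = n) {X : Finset (Fin n)}
    (hX : X ∈ (D.rowPartition M k).parts) : #X = 1 :=
  Finpartition.card_eq_one_of_mem_fibers
    (fun a b hab => D.idx_injective hp (congrArg Prod.fst hab)) hX

theorem parts_rowPartition_of_p_eq_one (hk : 1 ≤ k) (hp : D.p = 1) :
    (D.rowPartition M k).parts = {Finset.univ} := by
  have hidx : ∀ a, D.idx a = 1 := fun a => by
    have := D.bounds_of_mem (D.mem_I_idx a)
    omega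
  have hband : ∀ c, c ∈ D.band k 1 := fun c => by
    rw [mem_band, hidx, Set.mem_Ioo]
    omega
  obtain ⟨a₀, -⟩ := D.in_nonempty 1 le_rfl (by omega)
  have : Nonempty (Fin n) := ⟨a₀⟩
  have hkey : ∀ a, D.rowKey M k a = (1, fun _ => none) := fun a => by
    simp only [rowKey, hidx]
    congr
    funext c
    simp [rowRestr, hband]
  exact Finpartition.parts_fibers_of_const fun a b => by rw [hkey, hkey]

variable {D}

section Refining

variable {R : Finpartition (Finset.univ : Finset (Fin n))} (hR : R ≤ D.rowPartition M k)
  {X : Finset (Fin n)} (hX : X ∈ R.parts) {a : Fin n} (ha : a ∈ X)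

include hR hX ha

theorem idx_eq_of_mem_part {b : Fin n} (hb : b ∈ X) : D.idx a = D.idx b :=
  congrArg Prod.fst (Finpartition.apply_eq_of_le_fibers hR hX ha hb)

theorem rowRestr_eq_of_mem_part : ∀ b ∈ X, ∀ b' ∈ X,
    rowRestr M (D.band k (D.idx a)) b = rowRestr M (D.band k (D.idx a)) b' := by
  intro b hb b' hb'
  obtain ⟨h1, h2⟩ := Prod.mk.inj (Finpartition.apply_eq_of_le_fibers hR hX hb hb')
  rw [idx_eq_of_mem_part hR hX ha hb]
  rwa [← h1] at h2

theorem matBag_subset_band (hM : ∀ i j, M i j = M j i) (hk : 1 ≤ k) :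
    matBag M R X ⊆ D.band k (D.idx a) := by
  intro v hv
  rw [mem_band, Set.mem_Ioo]
  rcases Finset.mem_union.1 hv with hvX | hvC
  · rw [← idx_eq_of_mem_part hR hX ha hvX]
    omega
  obtain ⟨C, hC, hvC⟩ := Finset.mem_biUnion.1 hvC
  obtain ⟨hCR, hXC⟩ := Finset.mem_filter.1 hC
  by_contra hfar
  refine not_nonConstZone_of_rowRestr_eq hM (rowRestr_eq_of_mem_part hR hX ha)
    (rowRestr_eq_of_mem_part hR hCR hvC) (fun c hc => ?_) (fun r hr => ?_) hXC
  · rw [mem_band, ← idx_eq_of_mem_part hR hCR hvC hc, Set.mem_Ioo]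
    exact hfar
  · rw [mem_band, ← idx_eq_of_mem_part hR hX ha hr, Set.mem_Ioo]
    omega

end Refining

theorem matStretchPart_le (hM : ∀ i j, M i j = M j i) (hk : 1 ≤ k)
    {R : Finpartition (Finset.univ : Finset (Fin n))} (hR : R ≤ D.rowPartition M k) {c : ℕ}
    (hc : ∀ q, #{Y ∈ R.parts | Y ⊆ D.I q} ≤ c) {X : Finset (Fin n)} (hX : X ∈ R.parts) :
    matStretchPart M R X ≤ 2 * k * c := by
  obtain ⟨a, ha⟩ := R.nonempty_of_mem_parts hX
  set i := D.idx a
  have hconflict : {Q ∈ R.parts | Conflict Q (matBag M R X)} ⊆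
      (Finset.Ioo (i - k) (i + k)).biUnion fun q => {Y ∈ R.parts | Y ⊆ D.I q} := by
    intro Q hQ
    obtain ⟨hQR, v, hv⟩ := Finset.mem_filter.1 hQ
    obtain ⟨b, hb⟩ := R.nonempty_of_mem_parts hQR
    rw [Finset.mem_inter] at hv
    have hvQ : D.idx v = D.idx b := D.idx_mem_of_mem_conv Set.ordConnected_singleton
      (fun b' hb' => idx_eq_of_mem_part hR hQR hb' hb) hv.1
    have hvX : D.idx v ∈ Set.Ioo (i - k) (i + k) := D.idx_mem_of_mem_conv Set.ordConnected_Ioo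
      (fun w hw => D.mem_band.1 (matBag_subset_band hR hX ha hM hk hw)) hv.2
    refine Finset.mem_biUnion.2 ⟨D.idx b, by simpa [hvQ] using hvX, Finset.mem_filter.2
      ⟨hQR, fun b' hb' => D.mem_I_iff.2 (idx_eq_of_mem_part hR hQR hb' hb)⟩⟩
  calc #{Q ∈ R.parts | Conflict Q (matBag M R X)}
      ≤ ∑ q ∈ Finset.Ioo (i - k) (i + k), #{Y ∈ R.parts | Y ⊆ D.I q} :=
        (Finset.card_le_card hconflict).trans Finset.card_biUnion_le
    _ ≤ #(Finset.Ioo (i - k) (i + k)) * c := Finset.sum_le_card_nsmul _ _ _ fun q _ => hc q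
    _ ≤ 2 * k * c := by
        gcongr
        rw [Int.card_Ioo]
        omega

theorem card_parts_subset_I_le {E : SymDiv n} (hE : DiagDiv M E k)
    (hED : ∀ q, D.I q ⊆ E.I q ∪ E.I (q + 1))
    {R : Finpartition (Finset.univ : Finset (Fin n))} (hER : E.rowPartition M k ≤ R) (q : ℤ) :
    #{Y ∈ R.parts | Y ⊆ D.I q} ≤ 2 * (k - 1) :=
  calc #{Y ∈ R.parts | Y ⊆ D.I q}
      ≤ #((D.I q).image (E.rowKey M k)) := Finpartition.card_filter_subset_le_card_image hER _
    _ ≤ #((E.I q).image (E.rowKey M k) ∪ (E.I (q + 1)).image (E.rowKey M k)) := by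
        rw [← Finset.image_union]
        exact Finset.card_le_card (Finset.image_subset_image (hED q))
    _ ≤ 2 * (k - 1) := by
        have := E.card_image_rowKey_le hE q
        have := E.card_image_rowKey_le hE (q + 1)
        grw [Finset.card_union_le]
        omega

theorem matStretch_le {E : SymDiv n} (hM : ∀ i j, M i j = M j i) (hk : 1 ≤ k)
    (hE : DiagDiv M E k) (hED : ∀ q, D.I q ⊆ E.I q ∪ E.I (q + 1))
    {R : Finpartition (Finset.univ : Finset (Fin n))} (hER : E.rowPartition M k ≤ R)
    (hRD : R ≤ D.rowPartition M k) : matStretch M R ≤ 4 * k ^ 3 := by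
  refine Finset.sup_le fun X hX => ?_
  calc matStretchPart M R X ≤ 2 * k * (2 * (k - 1)) :=
        matStretchPart_le hM hk hRD (card_parts_subset_I_le hE hED hER) hX
    _ ≤ 2 * k * (2 * k) := by gcongr; omega
    _ ≤ 4 * k ^ 3 := by nlinarith

end SymDiv

namespace DivMerge

variable {n k : ℕ} {M : Fin n → Fin n → Bool} {E D : SymDiv n}

theorem exists_idx_eq (h : DivMerge E D) :
    ∃ m : ℤ, ∀ a, D.idx a = if E.idx a ≤ m then E.idx a else E.idx a - 1 := by
  obtain ⟨-, m, -, -, hlt, heq, hgt⟩ := h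
  refine ⟨m, fun a => D.mem_I_iff.1 ?_⟩
  have ha := E.mem_I_idx a
  rcases lt_trichotomy (E.idx a) m with h | h | h
  · rwa [if_pos h.le, hlt _ h]
  · rw [if_pos h.le, h, heq]
    exact Finset.mem_union_left _ (h ▸ ha)
  · rw [if_neg (not_le.2 h)]
    rcases eq_or_lt_of_le (show m + 1 ≤ E.idx a by omega) with h' | h'
    · rw [← h', add_sub_cancel_right, heq]
      exact Finset.mem_union_right _ (h' ▸ ha)
    · rwa [hgt _ (by omega), sub_add_cancel]

theorem I_subset (h : DivMerge E D) (q : ℤ) : D.I q ⊆ E.I q ∪ E.I (q + 1) := by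
  obtain ⟨m, hm⟩ := h.exists_idx_eq
  intro a ha
  rw [D.mem_I_iff, hm] at ha
  rw [Finset.mem_union, E.mem_I_iff, E.mem_I_iff]
  split_ifs at ha <;> omega

theorem rowPartition_le (h : DivMerge E D) : E.rowPartition M k ≤ D.rowPartition M k := by
  obtain ⟨m, hm⟩ := h.exists_idx_eq
  have hband : ∀ i, E.band k i ⊆ D.band k (if i ≤ m then i else i - 1) := fun i a ha => by
    rw [SymDiv.mem_band, Set.mem_Ioo] at ha ⊢
    rw [hm]
    split_ifs <;> omega
  refine Finpartition.fibers_le_fibers fun a b hab => ?_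
  obtain ⟨h1, h2⟩ := Prod.mk.inj hab
  rw [← h1] at h2
  have hidx : D.idx a = D.idx b := by rw [hm, hm, h1]
  refine Prod.ext hidx ?_
  change rowRestr M (D.band k (D.idx a)) a = rowRestr M (D.band k (D.idx b)) b
  rw [← hidx, hm a]
  exact rowRestr_eq_of_subset (hband _) h2

theorem reflTransGen_rowPartition (hM : ∀ i j, M i j = M j i) (hk : 1 ≤ k)
    (h : DivMerge E D) (hE : DiagDiv M E k) :
    ReflTransGen (fun P Q => MergeStep P Q ∧ matStretch M Q ≤ 4 * k ^ 3)
      (E.rowPartition M k) (D.rowPartition M k) :=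
  ReflTransGen.mono
    (fun _ _ hPQ => ⟨hPQ.1, SymDiv.matStretch_le hM hk hE h.I_subset hPQ.2.1 hPQ.2.2⟩)
    _ _ (reflTransGen_mergeStep_of_le h.rowPartition_le)

end DivMerge

/-- If the symmetric 0,1-matrix `M` admits a sequence of symmetric `k`-diagonal divisions,
then `stw(M) ≤ 4k³`. -/
theorem stw_le_of_diag_div_seq (n k : ℕ) (hk : 1 ≤ k)
    (M : Fin n → Fin n → Bool) (hM : ∀ i j, M i j = M j i)
    (h : ∃ l : List (SymDiv n), IsDivSeq l ∧ ∀ D ∈ l, DiagDiv M D k) :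
    stwM M ≤ 4 * k ^ 3 := by
  obtain ⟨l, ⟨⟨D₀, hl₀, hD₀⟩, ⟨D₁, hl₁, hD₁⟩, hl⟩, hdiag⟩ := h
  obtain ⟨l, rfl⟩ : ∃ l', l = D₀ :: l' := ⟨l.tail, List.eq_cons_of_mem_head? hl₀⟩
  have hdivs : ReflTransGen (fun E D => DivMerge E D ∧ DiagDiv M E k) D₀ D₁ :=
    List.relationReflTransGen_of_exists_isChain_cons l
      (hl.imp_of_mem_imp fun E _ hE _ hED => ⟨hED, hdiag E hE⟩)
      (by simpa [List.getLast?_eq_getLast_of_ne_nil] using hl₁)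
  have hparts := hdivs.lift' (SymDiv.rowPartition · M k)
    fun E D hED => hED.1.reflTransGen_rowPartition hM hk hED.2
  obtain ⟨c, hc, hlast⟩ := List.exists_isChain_cons_of_relationReflTransGen hparts
  have hseq : IsPartitionSeq (D₀.rowPartition M k :: c) :=
    ⟨⟨_, rfl, fun _ => D₀.card_eq_one_of_mem_rowPartition hD₀⟩,
      ⟨_, by rw [List.getLast?_eq_some_getLast (List.cons_ne_nil _ _), hlast],
        D₁.parts_rowPartition_of_p_eq_one hk hD₁⟩,
      hc.imp fun _ _ => And.left⟩
  have hbounded : ∀ P ∈ D₀.rowPartition M k :: c, matStretch M P ≤ 4 * k ^ 3 :=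
    hc.induction _ _ (fun _ _ h _ => h.2) fun _ => SymDiv.matStretch_le hM hk
      (hdiag D₀ List.mem_cons_self) (fun _ => Finset.subset_union_left) le_rfl le_rfl
  exact Nat.sInf_le ⟨_, hseq, hbounded⟩

end StretchPaper
end
end

section
/- For every ordered graph (G,≺) and every integer t ≥ 1, if the overlap graph Ov(G,≺) contains a K_{t,t} subgraph, then there exist disjoint sets X, Y ⊆ E(G), each of size ⌊t/2⌋, such that every edge of X crosses every edge of Y and, for every x ∈ X and y ∈ Y, L(x) ≺ L(y) (i.e., the biclique is clean, with X strictly left of Y). -/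
open Finset

noncomputable section
open scoped Classical
set_option linter.unusedSectionVars false
set_option linter.unusedVariables false

namespace StretchPaper

/-! ### Partitions, red graphs, component twin-width and stretch-width of graphs -/

variable {V : Type} [Fintype V] [DecidableEq V]

/-! ### Symmetric 0,1-matrices: stretch-width and divisions -/

variable {n : ℕ}

/-! Among the `2t` edges of the biclique `(A, B)` take the `t` whose left endpoints come
first. If `A` contributes `a` of them, then `B` contributes `t - a` and keeps `a` edges further
right, while `A` keeps `t - a`; so one side has `⌊t/2⌋` early edges and the other `⌊t/2⌋` late
ones. Crossing edges never share their left endpoint, which makes the order strict. -/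

lemma Cross.symm {α : Type} [LinearOrder α] {e f : Sym2 α} (h : Cross e f) : Cross f e :=
  Or.symm h

lemma Cross.eL_lt_of_le {α : Type} [LinearOrder α] {e f : Sym2 α} (h : Cross e f)
    (hle : eL e ≤ eL f) : eL e < eL f := by
  rcases h with h | h
  · exact h.1
  · exact absurd h.1 hle.not_gt

lemma exists_subset_card_eq_forall_le {β γ : Type} [LinearOrder γ] (f : β → γ)
    (S : Finset β) {k : ℕ} (hk : k ≤ S.card) :
    ∃ U ⊆ S, U.card = k ∧ ∀ x ∈ U, ∀ y ∈ S \ U, f x ≤ f y := by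
  induction k with
  | zero => exact ⟨∅, empty_subset S, card_empty, by simp⟩
  | succ k ih =>
    obtain ⟨U, hUS, hUcard, hUle⟩ := ih (by omega)
    have hrest : (S \ U).Nonempty := by
      rw [← card_pos, card_sdiff_of_subset hUS]; omega
    obtain ⟨m, hm, hmin⟩ := exists_min_image (S \ U) f hrest
    obtain ⟨hmS, hmU⟩ := mem_sdiff.1 hm
    refine ⟨insert m U, insert_subset hmS hUS, by rw [card_insert_of_notMem hmU, hUcard], ?_⟩
    intro x hx y hy
    have hyU : y ∈ S \ U := sdiff_subset_sdiff subset_rfl (subset_insert m U) hy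
    rcases mem_insert.1 hx with rfl | hx
    · exact hmin y hyU
    · exact hUle x hx y hyU

lemma exists_subsets_card_eq_of_initial_segment {β γ : Type} [LinearOrder γ] (f : β → γ)
    {S U A B : Finset β} {m : ℕ} (hB : B ⊆ S) (hU : ∀ x ∈ U, ∀ y ∈ S \ U, f x ≤ f y)
    (hAm : m ≤ (A ∩ U).card) (hBm : m ≤ (B \ U).card) :
    ∃ X Y : Finset β, X ⊆ A ∧ Y ⊆ B ∧ X.card = m ∧ Y.card = m ∧
      ∀ x ∈ X, ∀ y ∈ Y, f x ≤ f y := by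
  obtain ⟨X, hX, hXcard⟩ := exists_subset_card_eq hAm
  obtain ⟨Y, hY, hYcard⟩ := exists_subset_card_eq hBm
  refine ⟨X, Y, hX.trans inter_subset_left, hY.trans sdiff_subset, hXcard, hYcard, ?_⟩
  intro x hx y hy
  exact hU x (inter_subset_right (hX hx)) y (sdiff_subset_sdiff hB subset_rfl (hY hy))

lemma exists_subsets_card_eq_half_forall_le {β γ : Type} [LinearOrder γ] (f : β → γ)
    {A B : Finset β} {t : ℕ} (hAB : Disjoint A B) (hA : A.card = t) (hB : B.card = t) :
    ∃ X Y : Finset β, (X ⊆ A ∧ Y ⊆ B ∨ X ⊆ B ∧ Y ⊆ A) ∧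
      X.card = t / 2 ∧ Y.card = t / 2 ∧ ∀ x ∈ X, ∀ y ∈ Y, f x ≤ f y := by
  obtain ⟨U, hU, hUcard, hUle⟩ :=
    exists_subset_card_eq_forall_le f (A ∪ B) (k := t)
      (by rw [card_union_of_disjoint hAB]; omega)
  have hsplit : (A ∩ U).card + (B ∩ U).card = t := by
    rw [← card_union_of_disjoint (hAB.mono inter_subset_left inter_subset_left),
      ← union_inter_distrib_right, inter_eq_right.2 hU, hUcard]
  have hArest := card_inter_add_card_sdiff A U
  have hBrest := card_inter_add_card_sdiff B U
  rcases le_total (B ∩ U).card (A ∩ U).card with hle | hle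
  · obtain ⟨X, Y, hXA, hYB, hXY⟩ := exists_subsets_card_eq_of_initial_segment f
      (A := A) subset_union_right hUle (m := t / 2) (by omega) (by omega)
    exact ⟨X, Y, .inl ⟨hXA, hYB⟩, hXY⟩
  · obtain ⟨X, Y, hXB, hYA, hXY⟩ := exists_subsets_card_eq_of_initial_segment f
      (A := B) subset_union_left hUle (m := t / 2) (by omega) (by omega)
    exact ⟨X, Y, .inr ⟨hXB, hYA⟩, hXY⟩

theorem clean_biclique_of_biclique_general {V : Type} [LinearOrder V]
    (G : SimpleGraph V) (t : ℕ) (h : OvHasKtt G t) :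
    ∃ X Y : Finset (Sym2 V), ↑X ⊆ G.edgeSet ∧ ↑Y ⊆ G.edgeSet ∧ Disjoint X Y ∧
      X.card = t / 2 ∧ Y.card = t / 2 ∧
      ∀ x ∈ X, ∀ y ∈ Y, Cross x y ∧ eL x < eL y := by
  obtain ⟨A, B, hA, hB, hAB, hAcard, hBcard, hcross⟩ := h
  obtain ⟨X, Y, hXY, hXcard, hYcard, hle⟩ :=
    exists_subsets_card_eq_half_forall_le eL hAB hAcard hBcard
  obtain ⟨hXG, hYG, hXYcross⟩ :
      ↑X ⊆ G.edgeSet ∧ ↑Y ⊆ G.edgeSet ∧ ∀ x ∈ X, ∀ y ∈ Y, Cross x y := by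
    rcases hXY with ⟨hXA, hYB⟩ | ⟨hXB, hYA⟩
    · exact ⟨(coe_subset.2 hXA).trans hA, (coe_subset.2 hYB).trans hB,
        fun x hx y hy => hcross x (hXA hx) y (hYB hy)⟩
    · exact ⟨(coe_subset.2 hXB).trans hB, (coe_subset.2 hYA).trans hA,
        fun x hx y hy => (hcross y (hYA hy) x (hXB hx)).symm⟩
  have hlt : ∀ x ∈ X, ∀ y ∈ Y, eL x < eL y :=
    fun x hx y hy => (hXYcross x hx y hy).eL_lt_of_le (hle x hx y hy)
  have hdisj : Disjoint X Y := disjoint_left.2 fun x hxX hxY => (hlt x hxX x hxY).false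
  exact ⟨X, Y, hXG, hYG, hdisj, hXcard, hYcard,
    fun x hx y hy => ⟨hXYcross x hx y hy, hlt x hx y hy⟩⟩

/-- If the overlap graph of `(G, ≤)` contains a `K_{t,t}` subgraph, then it contains a
clean `K_{⌊t/2⌋,⌊t/2⌋}` subgraph: disjoint sets `X, Y` of `⌊t/2⌋` edges each, pairwise
crossing, with `X` strictly left of `Y`. -/
theorem clean_biclique_of_biclique {V : Type} [Fintype V] [LinearOrder V]
    (G : SimpleGraph V) (t : ℕ) (ht : 1 ≤ t) (h : OvHasKtt G t) :
    ∃ X Y : Finset (Sym2 V), ↑X ⊆ G.edgeSet ∧ ↑Y ⊆ G.edgeSet ∧ Disjoint X Y ∧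
      X.card = t / 2 ∧ Y.card = t / 2 ∧
      ∀ x ∈ X, ∀ y ∈ Y, Cross x y ∧ eL x < eL y :=
  clean_biclique_of_biclique_general G t h

end StretchPaper
end
end

section
/- Let (G,≺) be an ordered graph and e = uv an edge of G with u ≺ v. Then every path in G that starts at a vertex strictly between u and v (in ≺) and ends at a vertex w with w ≺ u or v ≺ w contains u, or contains v, or contains an edge crossing e. -/
open Finset

noncomputable section
open scoped Classical
set_option linter.unusedSectionVars false
set_option linter.unusedVariables false

namespace StretchPaper

/-! ### Partitions, red graphs, component twin-width and stretch-width of graphs -/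

variable {V : Type} [Fintype V] [DecidableEq V]

/-! ### Symmetric 0,1-matrices: stretch-width and divisions -/

variable {n : ℕ}

section Crossing
variable {α : Type} [LinearOrder α]

@[simp] lemma eL_mk (a b : α) : eL s(a, b) = min a b := rfl

@[simp] lemma eR_mk (a b : α) : eR s(a, b) = max a b := rfl

lemma cross_of_mem_Ioo_of_notMem_Icc {u v x y : α} (hx : x ∈ Set.Ioo u v)
    (hy : y ∉ Set.Icc u v) : Cross s(x, y) s(u, v) := by
  obtain ⟨hux, hxv⟩ := hx
  have huv : u < v := hux.trans hxv
  rcases not_and_or.mp hy with hyu | hvy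
  · have hyx : y < x := (not_le.mp hyu).trans hux
    left
    simp only [eL_mk, eR_mk, min_eq_right hyx.le, max_eq_left hyx.le, min_eq_left huv.le,
      max_eq_right huv.le]
    exact ⟨not_le.mp hyu, hux, hxv⟩
  · have hxy : x < y := hxv.trans (not_le.mp hvy)
    right
    simp only [eL_mk, eR_mk, min_eq_left hxy.le, max_eq_right hxy.le, min_eq_left huv.le,
      max_eq_right huv.le]
    exact ⟨hux, hxv, not_le.mp hvy⟩

/-- A walk leaving the open interval `(u, v)` must step onto `u` or `v` or jump over one of
them, and such a jump is an edge crossing `uv`. -/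
theorem walk_exits_Ioo_meets_endpoint_or_crossing {G : SimpleGraph α}
    {u v a b : α} (p : G.Walk a b) (ha : a ∈ Set.Ioo u v) (hb : b ∉ Set.Ioo u v) :
    u ∈ p.support ∨ v ∈ p.support ∨ ∃ f ∈ p.edges, Cross f s(u, v) := by
  obtain ⟨d, hd, hin, hout⟩ := p.exists_boundary_dart _ ha hb
  have hsnd : d.snd ∈ p.support := p.dart_snd_mem_support_of_mem_darts hd
  by_cases hu : d.snd = u
  · exact .inl (hu ▸ hsnd)
  by_cases hv : d.snd = v
  · exact .inr (.inl (hv ▸ hsnd))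
  have hIcc : d.snd ∉ Set.Icc u v := fun h =>
    hout ⟨lt_of_le_of_ne h.1 (Ne.symm hu), lt_of_le_of_ne h.2 hv⟩
  exact .inr (.inr ⟨d.edge, List.mem_map_of_mem hd, cross_of_mem_Ioo_of_notMem_Icc hin hIcc⟩)

end Crossing

theorem path_meets_endpoint_or_crossing_general {V : Type} [LinearOrder V]
    (G : SimpleGraph V) (u v : V)
    (a b : V) (ha : u < a ∧ a < v) (hb : b < u ∨ v < b)
    (p : G.Walk a b) :
    u ∈ p.support ∨ v ∈ p.support ∨ ∃ f ∈ p.edges, Cross f s(u, v) := by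
  refine walk_exits_Ioo_meets_endpoint_or_crossing p ha fun hbI => ?_
  rcases hb with hbu | hvb
  · exact hbu.not_gt hbI.1
  · exact hvb.not_gt hbI.2

/-- Every path from a vertex strictly between the endpoints of an edge `uv` (with `u < v`)
to a vertex outside `[u, v]` contains `u`, or `v`, or an edge crossing `uv`. -/
theorem path_meets_endpoint_or_crossing {V : Type} [Fintype V] [LinearOrder V]
    (G : SimpleGraph V) (u v : V) (huv : G.Adj u v) (hlt : u < v)
    (a b : V) (ha : u < a ∧ a < v) (hb : b < u ∨ v < b)
    (p : G.Walk a b) (hp : p.IsPath) :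
    u ∈ p.support ∨ v ∈ p.support ∨ ∃ f ∈ p.edges, Cross f s(u, v) :=
  path_meets_endpoint_or_crossing_general G u v a b ha hb p

end StretchPaper
end
end

section
/- There is a constant c such that the following holds. Let t ≥ 1 be an integer, let (G,≺) be an ordered graph whose overlap graph Ov(G,≺) has no K_{t,t} subgraph, let v be a vertex of G, and let S be a maximum rainbow over v. Then there exist a vertex x ∈ S^i ∪ {v} and a set U ⊆ V(G) with |U| ≤ c·t²·log₂(ℓ(S,≺)+2) such that every path in G from a vertex w with w ≺ x to a vertex w' with x ≺ w' contains a vertex of U. -/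
open Finset

noncomputable section
open scoped Classical
set_option linter.unusedSectionVars false
set_option linter.unusedVariables false

namespace StretchPaper

/-! ### Partitions, red graphs, component twin-width and stretch-width of graphs -/

variable {V : Type} [Fintype V] [DecidableEq V]

/-! ### Symmetric 0,1-matrices: stretch-width and divisions -/

variable {n : ℕ}

/-!
Let `e₁` be the outermost edge of `S` and cut the interval strictly inside `e₁`, of length
less than `2 ^ m` with `m ≈ log₂ ℓ(S)`, into dyadic windows. When a window is halved, the
edges entering its right half from the left of the window all cross the edges leaving its
left half to the right of the window; as `Ov(G, ≺)` has no `K_{t,t}`, one of these two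
families has fewer than `t` edges, and we descend into the half whose family is small.
After `m` halvings we are left with a single vertex `x`, and every edge over `x` is one of
the at most `m t` edges collected on the way or jumps over the whole interval inside `e₁`.
By maximality of `S`, an edge of the latter kind shares its left endpoint with `e₁`. So the
left endpoints of the collected edges, of `e₁`, and `x` itself meet every path across `x`.
-/

section Separation

variable {α : Type} [LinearOrder α] {G : SimpleGraph α}

lemma eL_mk_of_lt {a b : α} (h : a < b) : eL s(a, b) = a := min_eq_left h.le

lemma eR_mk_of_lt {a b : α} (h : a < b) : eR s(a, b) = b := max_eq_right h.le

lemma not_cross_self (e : Sym2 α) : ¬ Cross e e := by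
  simp [Cross]

lemma card_lt_or_card_lt_of_forall_cross {t : ℕ} (hK : ¬ OvHasKtt G t)
    {A B : Finset (Sym2 α)} (hA : ↑A ⊆ G.edgeSet) (hB : ↑B ⊆ G.edgeSet)
    (hAB : ∀ e ∈ A, ∀ f ∈ B, Cross e f) : #A < t ∨ #B < t := by
  by_contra! h
  obtain ⟨A', hA', hA't⟩ := exists_subset_card_eq h.1
  obtain ⟨B', hB', hB't⟩ := exists_subset_card_eq h.2
  refine hK ⟨A', B', (coe_subset.mpr hA').trans hA, (coe_subset.mpr hB').trans hB, ?_,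
    hA't, hB't, fun e he f hf => hAB e (hA' he) f (hB' hf)⟩
  exact disjoint_left.mpr fun e he he' => not_cross_self e (hAB e (hA' he) e (hB' he'))

lemma _root_.SimpleGraph.Walk.exists_mem_support_of_lt_of_lt {x : α} {U : Finset α} (hx : x ∈ U) (hU : ∀ e ∈ G.edgeSet, eL e < x → x < eR e → eL e ∈ U) :
    ∀ {a b : α} (q : G.Walk a b), a < x → x < b → ∃ z ∈ U, z ∈ q.support
  | _, _, .nil, ha, hb => absurd (ha.trans hb) (lt_irrefl _)
  | a, _, .cons (v := c) hac q, ha, hb => by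
    rcases lt_trichotomy c x with hc | rfl | hc
    · obtain ⟨z, hzU, hz⟩ := exists_mem_support_of_lt_of_lt hx hU q hc hb
      exact ⟨z, hzU, by simp [hz]⟩
    · exact ⟨c, hx, by simp⟩
    · have := hU s(a, c) hac (by rwa [eL_mk_of_lt (ha.trans hc)])
        (by rwa [eR_mk_of_lt (ha.trans hc)])
      exact ⟨a, by rwa [eL_mk_of_lt (ha.trans hc)] at this, by simp⟩

variable [Fintype α] {S : Finset (Sym2 α)} {v : α}

lemma mem_edgeInterior {e : Sym2 α} {x : α} : x ∈ edgeInterior e ↔ eL e < x ∧ x < eR e := by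
  simp [edgeInterior]

lemma IsRainbowOver.insert {e : Sym2 α} (hS : IsRainbowOver G S v) (he : e ∈ G.edgeSet) (hv : eL e < v ∧ v < eR e)
    (hsub : ∀ f ∈ S, edgeInterior f ⊆ edgeInterior e) : IsRainbowOver G (insert e S) v := by
  obtain ⟨⟨hSG, hnest⟩, hover⟩ := hS
  refine ⟨⟨?_, ?_⟩, ?_⟩
  · rw [coe_insert]
    exact Set.insert_subset he hSG
  · simp only [mem_insert, forall_eq_or_imp]
    exact ⟨⟨Or.inl subset_rfl, fun f hf => Or.inr (hsub f hf)⟩,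
      fun f hf => ⟨Or.inl (hsub f hf), hnest f hf⟩⟩
  · simpa only [mem_insert, forall_eq_or_imp] using ⟨hv, hover⟩

lemma IsMaxRainbowOver.nonempty {e : Sym2 α} (hS : IsMaxRainbowOver G S v) (he : e ∈ G.edgeSet)
    (hv : eL e < v ∧ v < eR e) : S.Nonempty := by
  have hempty : IsRainbowOver G ∅ v := ⟨⟨by simp, by simp⟩, by simp⟩
  simpa using hS.2 _ (hempty.insert he hv (by simp))

lemma IsRainbow.exists_outermost (hS : IsRainbow G S) (hne : S.Nonempty) :
    ∃ e₁ ∈ S, ∀ f ∈ S, edgeInterior f ⊆ edgeInterior e₁ := by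
  obtain ⟨e₁, he₁, hmax⟩ := S.exists_max_image (fun e => #(edgeInterior e)) hne
  refine ⟨e₁, he₁, fun f hf => ?_⟩
  rcases hS.2 f hf e₁ he₁ with h | h
  · exact h
  · rw [eq_of_subset_of_card_le h (hmax f hf)]

/-- Otherwise `e` could be added to `S`. -/
lemma IsMaxRainbowOver.eL_eq_of_encloses {e₁ e : Sym2 α} (hS : IsMaxRainbowOver G S v) (he₁ : e₁ ∈ S)
    (hout : ∀ f ∈ S, edgeInterior f ⊆ edgeInterior e₁) (he : e ∈ G.edgeSet)
    (hL : eL e ≤ eL e₁) (hR : eR e₁ ≤ eR e) : eL e = eL e₁ := by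
  by_contra hne
  have hlt : eL e < eL e₁ := lt_of_le_of_ne hL hne
  obtain ⟨hv₁, hv₂⟩ := hS.1.2 e₁ he₁
  have hsub : edgeInterior e₁ ⊆ edgeInterior e := fun y hy => by
    rw [mem_edgeInterior] at hy ⊢
    exact ⟨hL.trans_lt hy.1, hy.2.trans_le hR⟩
  have heS : e ∉ S := fun h => by
    have := hout e h (mem_edgeInterior.mpr ⟨hlt, (hv₁.trans hv₂).trans_le hR⟩)
    exact lt_irrefl _ (mem_edgeInterior.mp this).1
  have := hS.2 _ (hS.1.insert he ⟨hlt.trans hv₁, hv₂.trans_le hR⟩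
    fun f hf => (hout f hf).trans hsub)
  rw [card_insert_of_notMem heS] at this
  omega

def rank (y : α) : ℕ := ((Fintype.orderIsoFinOfCardEq α rfl).symm y : ℕ)

lemma rank_lt_rank {x y : α} : rank x < rank y ↔ x < y := by
  simp [rank]

lemma rank_le_rank {x y : α} : rank x ≤ rank y ↔ x ≤ y := by
  simp [rank]

lemma rank_lt_card (y : α) : rank y < Fintype.card α :=
  ((Fintype.orderIsoFinOfCardEq α rfl).symm y).isLt

lemma exists_rank_eq {k : ℕ} (hk : k < Fintype.card α) : ∃ y : α, rank y = k :=
  ⟨Fintype.orderIsoFinOfCardEq α rfl ⟨k, hk⟩, by simp [rank]⟩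

lemma edgeLen_eq (e : Sym2 α) : edgeLen e = rank (eR e) - rank (eL e) := by
  set φ := (Fintype.orderIsoFinOfCardEq α rfl).symm
  rw [edgeLen, rank, rank, ← Fin.card_Ioc, ← card_map φ.toEquiv.toEmbedding]
  congr 1
  ext i
  obtain ⟨y, rfl⟩ := φ.surjective i
  simp [φ]

variable (G) in
def HasPivot (a b k : ℕ) : Prop :=
  ∃ x, a ≤ rank x ∧ rank x < b ∧ ∃ F : Finset (Sym2 α), #F ≤ k ∧
    ∀ e ∈ G.edgeSet, eL e < x → x < eR e → (rank (eL e) < a ∧ b ≤ rank (eR e)) ∨ e ∈ F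

lemma hasPivot_singleton {a : ℕ} (ha : a < Fintype.card α) : HasPivot G a (a + 1) 0 := by
  obtain ⟨x, rfl⟩ := exists_rank_eq ha
  refine ⟨x, le_rfl, Nat.lt_succ_self _, ∅, le_rfl, fun e _ hl hr => Or.inl ?_⟩
  exact ⟨rank_lt_rank.mpr hl, rank_lt_rank.mpr hr⟩

lemma HasPivot.mono {a b k k' : ℕ} (h : HasPivot G a b k) (hk : k ≤ k') :
    HasPivot G a b k' := by
  obtain ⟨x, hax, hxb, F, hF, hcov⟩ := h
  exact ⟨x, hax, hxb, F, hF.trans hk, hcov⟩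

/-- Every edge entering `[mid, b)` from the left of `a` crosses every edge leaving `[a, mid)`
to the right of `b`, so one of the two families is small and we keep the corresponding half. -/
lemma HasPivot.of_halves {t a mid b k : ℕ} (hK : ¬ OvHasKtt G t) (ham : a ≤ mid)
    (hmb : mid ≤ b) (hL : HasPivot G a mid k) (hR : HasPivot G mid b k) :
    HasPivot G a b (k + t) := by
  set A := univ.filter fun e : Sym2 α =>
    e ∈ G.edgeSet ∧ rank (eL e) < a ∧ mid ≤ rank (eR e) ∧ rank (eR e) < b
  set B := univ.filter fun e : Sym2 α =>
    e ∈ G.edgeSet ∧ a ≤ rank (eL e) ∧ rank (eL e) < mid ∧ b ≤ rank (eR e)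
  have hcross : ∀ e ∈ A, ∀ f ∈ B, Cross e f := by
    intro e he f hf
    simp only [A, B, mem_filter, mem_univ, true_and] at he hf
    refine Or.inl ⟨?_, ?_, ?_⟩ <;> rw [← rank_lt_rank] <;> omega
  rcases card_lt_or_card_lt_of_forall_cross hK (fun e he => (mem_filter.mp he).2.1)
      (fun e he => (mem_filter.mp he).2.1) hcross with hA | hB
  · obtain ⟨x, hax, hxb, F, hF, hcov⟩ := hL
    refine ⟨x, hax, hxb.trans_le hmb, F ∪ A, (card_union_le F A).trans (by omega), ?_⟩
    intro e he hl hr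
    rcases hcov e he hl hr with ⟨h₁, h₂⟩ | heF
    · by_cases h₃ : b ≤ rank (eR e)
      · exact Or.inl ⟨h₁, h₃⟩
      · exact Or.inr (mem_union_right F (by simp [A, he, h₁, h₂, lt_of_not_ge h₃]))
    · exact Or.inr (mem_union_left A heF)
  · obtain ⟨x, hax, hxb, F, hF, hcov⟩ := hR
    refine ⟨x, ham.trans hax, hxb, F ∪ B, (card_union_le F B).trans (by omega), ?_⟩
    intro e he hl hr
    rcases hcov e he hl hr with ⟨h₁, h₂⟩ | heF
    · by_cases h₃ : rank (eL e) < a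
      · exact Or.inl ⟨h₃, h₂⟩
      · exact Or.inr (mem_union_right F (by simp [B, he, h₁, h₂, le_of_not_gt h₃]))
    · exact Or.inr (mem_union_left B heF)

lemma hasPivot_of_le_pow {t : ℕ} (hK : ¬ OvHasKtt G t) (m : ℕ) :
    ∀ {a b : ℕ}, a < b → b ≤ Fintype.card α → b ≤ a + 2 ^ m → HasPivot G a b (m * t) := by
  induction m with
  | zero =>
    intro a b hab hb hlen
    obtain rfl : b = a + 1 := by simp at hlen; omega
    simpa using hasPivot_singleton (G := G) (by omega : a < Fintype.card α)
  | succ n ih =>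
    intro a b hab hb hlen
    by_cases hshort : b ≤ a + 2 ^ n
    · exact (ih hab hb hshort).mono (Nat.mul_le_mul_right t n.le_succ)
    · have hpow : 2 ^ (n + 1) = 2 ^ n + 2 ^ n := by ring
      rw [Nat.succ_mul]
      exact HasPivot.of_halves hK (by omega) (by omega)
        (ih (by simp) (by omega) le_rfl) (ih (by omega) hb (by omega))

lemma cast_le_four_mul_sq_mul_logb {n t ℓ : ℕ} (ht : 1 ≤ t)
    (hn : n ≤ (Nat.log 2 (ℓ + 2) + 1) * t + 2) :
    (n : ℝ) ≤ 4 * (t : ℝ) ^ 2 * Real.logb 2 ((ℓ : ℝ) + 2) := by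
  have hk : 1 ≤ Nat.log 2 (ℓ + 2) := Nat.log_pos one_lt_two (by omega)
  have hnat : n ≤ 4 * t ^ 2 * Nat.log 2 (ℓ + 2) := by nlinarith
  have hlog : (Nat.log 2 (ℓ + 2) : ℝ) ≤ Real.logb 2 ((ℓ : ℝ) + 2) := by
    exact_mod_cast Real.natLog_le_logb (ℓ + 2) 2
  calc (n : ℝ) ≤ 4 * (t : ℝ) ^ 2 * (Nat.log 2 (ℓ + 2) : ℝ) := by exact_mod_cast hnat
    _ ≤ 4 * (t : ℝ) ^ 2 * Real.logb 2 ((ℓ : ℝ) + 2) := by gcongr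

end Separation

/-- Separation main lemma: there is a constant `c` such that, whenever the overlap graph of
`(G, ≤)` has no `K_{t,t}` subgraph and `S` is a maximum rainbow over `v`, some vertex
`x ∈ S^i ∪ {v}` can be separated from both sides by a set `U` of at most
`c·t²·log₂(ℓ(S)+2)` vertices. -/
theorem separation_main_lemma :
    ∃ c : ℝ, 0 < c ∧ ∀ t : ℕ, 1 ≤ t →
      ∀ (V : Type) [Fintype V] [LinearOrder V] (G : SimpleGraph V),
        ¬ OvHasKtt G t →
        ∀ (v : V) (S : Finset (Sym2 V)), IsMaxRainbowOver G S v →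
          ∃ (x : V) (U : Finset V),
            (x ∈ S.biUnion edgeInterior ∨ x = v) ∧
            (U.card : ℝ) ≤ c * (t : ℝ) ^ 2 * Real.logb 2 ((lenSup S : ℝ) + 2) ∧
            ∀ a b : V, a < x → x < b → ∀ q : G.Walk a b, q.IsPath →
              ∃ z ∈ U, z ∈ q.support := by
  refine ⟨4, by norm_num, fun t ht V _ _ G hK v S hS => ?_⟩
  rcases S.eq_empty_or_nonempty with rfl | hne
  · refine ⟨v, {v}, Or.inr rfl, cast_le_four_mul_sq_mul_logb ht (by simp),
      fun a b ha hb q _ => q.exists_mem_support_of_lt_of_lt (mem_singleton_self v) ?_ ha hb⟩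
    exact fun e he hl hr => absurd (hS.nonempty he ⟨hl, hr⟩) (by simp)
  obtain ⟨e₁, he₁, hout⟩ := hS.1.1.exists_outermost hne
  have hv₁ := rank_lt_rank.mpr (hS.1.2 e₁ he₁).1
  have hv₂ := rank_lt_rank.mpr (hS.1.2 e₁ he₁).2
  have hlen : rank (eR e₁) - rank (eL e₁) ≤ lenSup S := edgeLen_eq e₁ ▸ le_sup he₁
  have hpow := Nat.lt_pow_succ_log_self one_lt_two (lenSup S + 2)
  obtain ⟨x, hax, hxb, F, hF, hcov⟩ := hasPivot_of_le_pow hK (Nat.log 2 (lenSup S + 2) + 1)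
    (a := rank (eL e₁) + 1) (b := rank (eR e₁)) (by omega) (rank_lt_card _).le (by omega)
  have hx : x ∈ edgeInterior e₁ :=
    mem_edgeInterior.mpr ⟨rank_lt_rank.mp hax, rank_lt_rank.mp hxb⟩
  refine ⟨x, insert x ((insert e₁ F).image eL), Or.inl (mem_biUnion.mpr ⟨e₁, he₁, hx⟩), ?_,
    fun a b ha hb q _ => q.exists_mem_support_of_lt_of_lt (mem_insert_self _ _) ?_ ha hb⟩
  · refine cast_le_four_mul_sq_mul_logb ht ?_
    have h₁ := card_insert_le x ((insert e₁ F).image eL)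
    have h₂ := card_image_le (s := insert e₁ F) (f := eL)
    have h₃ := card_insert_le e₁ F
    omega
  · intro e he hl hr
    rcases hcov e he hl hr with ⟨h₁, h₂⟩ | heF
    · have := hS.eL_eq_of_encloses he₁ hout he (rank_le_rank.mp (by omega))
        (rank_le_rank.mp h₂)
      simp [this]
    · simpa using Or.inr (Or.inr ⟨e, heF, rfl⟩)

end StretchPaper
end
end
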